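/- arXiv:0712.2533 — 4 statements merged into one kernel-verified Lean document; each statement's English description precedes it below -/
import Mathlib

section
/- Let r be odd, ρ = e^{2πi/r}, and let B : ℂ^r → ℝ be defined by B((z_j)_j) = Σ_{j ∈ ZMod r} y_j·(x_{j+1} − x_j), where z_j = x_j + i y_j. Then for z_j = α·ρ^{mj} with α ∈ ℂ and m an integer with 1 ≤ m ≤ (r−1)/2, one has 2·B(z) = −r·|α|²·sin(2πm/r), which is strictly negative. -/
open Complex

noncomputable section

/-- The quadratic form `B (z) = Σ_j y_j (x_{j+1} − x_j)` on `ℂ^r`,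
where `z_j = x_j + i y_j`. -/
def discreteAction (r : ℕ) [NeZero r] (z : ZMod r → ℂ) : ℝ :=
  ∑ j : ZMod r, (z j).im * ((z (j + 1)).re - (z j).re)

/-!
A mode `z_j = α u^j` with `u = ρ^m` satisfies `z_{j+1} = u z_j`. Expanding
`2 y_j (x_{j+1} - x_j)` in terms of `z_j²` and `|z_j|²` leaves a term linear in
`Σ z_j²`, which vanishes because the sum is invariant under the shift `j ↦ j + 1`
while the shift multiplies it by `u² ≠ 1`. What remains is `-Im u · Σ |z_j|² =
-r |α|² sin (2πm/r)`.
-/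

namespace ZMod

variable {r : ℕ} [NeZero r]

theorem pow_val_add_one {M : Type*} [Monoid M] {u : M} (hu : u ^ r = 1) (j : ZMod r) :
    u ^ (j + 1).val = u ^ j.val * u := by
  rw [← pow_succ, ZMod.val_add, ZMod.val_one_eq_one_mod, Nat.add_mod_mod]
  exact (pow_eq_pow_mod _ hu).symm

theorem sum_sq_eq_zero_of_add_one_eq_mul {R : Type*} [CommRing R] [IsDomain R]
    {z : ZMod r → R} {w : R} (hstep : ∀ j, z (j + 1) = w * z j) (hw : w ^ 2 ≠ 1) :
    ∑ j, z j ^ 2 = 0 := by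
  have hshift : w ^ 2 * ∑ j, z j ^ 2 = ∑ j, z j ^ 2 := by
    calc w ^ 2 * ∑ j, z j ^ 2 = ∑ j, z (j + 1) ^ 2 := by
          simp only [Finset.mul_sum, hstep, mul_pow]
      _ = ∑ j, z j ^ 2 := Equiv.sum_comp (Equiv.addRight 1) (fun j => z j ^ 2)
  have : (w ^ 2 - 1) * ∑ j, z j ^ 2 = 0 := by rw [sub_mul, hshift, one_mul, sub_self]
  exact (mul_eq_zero.mp this).resolve_left (sub_ne_zero.mpr hw)

end ZMod

theorem two_mul_im_mul_sub_re (z w : ℂ) :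
    2 * (z.im * ((w * z).re - z.re)) =
      (z ^ 2).im * (w.re - 1) + (z ^ 2).re * w.im - normSq z * w.im := by
  simp only [normSq_apply, pow_two, mul_re, mul_im]
  ring

variable {r : ℕ} [NeZero r]

theorem two_mul_discreteAction_of_add_one_eq_mul {z : ZMod r → ℂ} {w : ℂ}
    (hstep : ∀ j, z (j + 1) = w * z j) (hw : w ^ 2 ≠ 1) :
    2 * discreteAction r z = -w.im * ∑ j, normSq (z j) := by
  have hsq := ZMod.sum_sq_eq_zero_of_add_one_eq_mul hstep hw
  have hre : ∑ j, (z j ^ 2).re = 0 := by rw [← re_sum, hsq, zero_re]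
  have him : ∑ j, (z j ^ 2).im = 0 := by rw [← im_sum, hsq, zero_im]
  calc 2 * discreteAction r z = ∑ j, 2 * ((z j).im * ((w * z j).re - (z j).re)) := by
        simp only [discreteAction, Finset.mul_sum, hstep]
    _ = (∑ j, (z j ^ 2).im) * (w.re - 1) + (∑ j, (z j ^ 2).re) * w.im
          - (∑ j, normSq (z j)) * w.im := by
        simp only [two_mul_im_mul_sub_re, Finset.sum_sub_distrib, Finset.sum_add_distrib,
          Finset.sum_mul]
    _ = -w.im * ∑ j, normSq (z j) := by rw [hre, him]; ring

theorem two_mul_discreteAction_geometric (α u : ℂ) (hu : u ^ r = 1) (hu2 : u ^ 2 ≠ 1) :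
    2 * discreteAction r (fun j => α * u ^ j.val) = -(r : ℝ) * ‖α‖ ^ 2 * u.im := by
  have hstep (j : ZMod r) : α * u ^ (j + 1).val = u * (α * u ^ j.val) := by
    rw [ZMod.pow_val_add_one hu]; ring
  have hnorm : ‖u‖ = 1 := norm_eq_one_of_pow_eq_one hu (NeZero.ne r)
  have hnormSq (j : ZMod r) : normSq (α * u ^ j.val) = ‖α‖ ^ 2 := by
    rw [← Complex.sq_norm, norm_mul, norm_pow, hnorm, one_pow, mul_one]
  rw [two_mul_discreteAction_of_add_one_eq_mul hstep hu2]
  simp only [hnormSq, Finset.sum_const, Finset.card_univ, ZMod.card, nsmul_eq_mul]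
  ring

theorem im_exp_two_pi_I_div_pow (r m : ℕ) :
    (exp (2 * Real.pi * I / r) ^ m).im = Real.sin (2 * Real.pi * m / r) := by
  rw [← exp_nat_mul]
  have : (m : ℂ) * (2 * Real.pi * I / r) = ((2 * Real.pi * m / r : ℝ) : ℂ) * I := by
    push_cast
    ring
  rw [this, exp_ofReal_mul_I_im]

theorem discreteAction_on_mode_general (r : ℕ) [NeZero r]
    (m : ℕ) (hm1 : 1 ≤ m) (hm2 : m ≤ (r - 1) / 2) (α : ℂ)
    (z : ZMod r → ℂ)
    (hz : z = fun j => α * Complex.exp (2 * Real.pi * I / r) ^ (m * j.val)) :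
    2 * discreteAction r z = -(r : ℝ) * ‖α‖ ^ 2 *
        Real.sin (2 * Real.pi * m / r) ∧
      (α ≠ 0 → 2 * discreteAction r z < 0) := by
  have hr : r ≠ 0 := NeZero.ne r
  have h2m : 2 * m < r := by omega
  set ζ := Complex.exp (2 * Real.pi * I / r)
  have hζ : IsPrimitiveRoot ζ r := isPrimitiveRoot_exp r hr
  have hu : (ζ ^ m) ^ r = 1 := by rw [← pow_mul, mul_comm, pow_mul, hζ.pow_eq_one, one_pow]
  have hu2 : (ζ ^ m) ^ 2 ≠ 1 := by
    rw [← pow_mul, mul_comm]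
    exact hζ.pow_ne_one_of_pos_of_lt (by omega) h2m
  have hformula : 2 * discreteAction r z =
      -(r : ℝ) * ‖α‖ ^ 2 * Real.sin (2 * Real.pi * m / r) := by
    simp only [hz, pow_mul]
    rw [two_mul_discreteAction_geometric α _ hu hu2, im_exp_two_pi_I_div_pow]
  refine ⟨hformula, fun hα => ?_⟩
  have hsin : 0 < Real.sin (2 * Real.pi * m / r) := by
    apply Real.sin_pos_of_pos_of_lt_pi (by positivity)
    rw [div_lt_iff₀ (by positivity)]
    have : (2 * m : ℝ) < r := by exact_mod_cast h2m
    nlinarith [Real.pi_pos]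
  rw [hformula, neg_mul, neg_mul, neg_lt_zero]
  have : (0 : ℝ) < r := by positivity
  positivity

/-- On the Fourier mode `z_j = α ρ^{mj}` with `1 ≤ m ≤ (r−1)/2` (`r` odd),
the discrete action satisfies `2 B (z) = − r |α|² sin (2πm/r)`, which is
strictly negative for `α ≠ 0`. -/
theorem discreteAction_on_mode (r : ℕ) [NeZero r] (hodd : Odd r)
    (m : ℕ) (hm1 : 1 ≤ m) (hm2 : m ≤ (r - 1) / 2) (α : ℂ)
    (z : ZMod r → ℂ)
    (hz : z = fun j => α * Complex.exp (2 * Real.pi * I / r) ^ (m * j.val)) :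
    2 * discreteAction r z = -(r : ℝ) * ‖α‖ ^ 2 *
        Real.sin (2 * Real.pi * m / r) ∧
      (α ≠ 0 → 2 * discreteAction r z < 0) :=
  discreteAction_on_mode_general r m hm1 hm2 α z hz

end
end

section
/- Let A be a real symmetric matrix on a finite-dimensional real inner product space V, with negative eigenspace E₋, kernel E₀, and positive eigenspace E₊. Let B be another symmetric matrix whose restriction to E₀ is negative definite (as a quadratic form: xᵀBx < 0 for x ∈ E₀ \ {0}). Then there exists s₀ > 0 such that for all 0 < s ≤ s₀, the quadratic form x ↦ xᵀ(A + sB)x is negative definite on E₋ ⊕ E₀. -/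
/-!
Write `x = y + z` with `y ∈ E₋` and `z ∈ E₀`. Since `A` is symmetric and kills `E₀`,
`⟪(A + s B) x, x⟫ = ⟪A y, y⟫ + s ⟪B x, x⟫`. Compactness of unit spheres upgrades the two
definiteness hypotheses to `⟪A y, y⟫ ≤ -c ‖y‖²` and `⟪B z, z⟫ ≤ -b ‖z‖²`, while the remaining
terms of `⟪B x, x⟫` are bounded by `‖B‖ ‖y‖ (‖y‖ + 2 ‖z‖)`. For small `s` the term `-c ‖y‖²`
absorbs them, after the cross term is split by AM-GM between `‖y‖²` and `-s b ‖z‖²`.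
-/

open Module
open scoped RealInnerProductSpace

section

variable {V : Type*} [NormedAddCommGroup V] [InnerProductSpace ℝ V]

lemma LinearMap.inner_map_smul_self (T : V →ₗ[ℝ] V) (r : ℝ) (x : V) :
    ⟪T (r • x), r • x⟫ = r ^ 2 * ⟪T x, x⟫ := by
  rw [map_smul, real_inner_smul_left, real_inner_smul_right]
  ring

lemma LinearMap.exists_inner_map_self_le_neg_mul_norm_sq [FiniteDimensional ℝ V]
    (T : V →ₗ[ℝ] V) (U : Submodule ℝ V) (hT : ∀ x ∈ U, x ≠ 0 → ⟪T x, x⟫ < 0) :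
    ∃ c > 0, ∀ x ∈ U, ⟪T x, x⟫ ≤ -c * ‖x‖ ^ 2 := by
  have hK : IsCompact (Metric.sphere (0 : V) 1 ∩ U) :=
    (isCompact_sphere 0 1).inter_right U.closed_of_finiteDimensional
  have hcont : Continuous fun x => -⟪T x, x⟫ :=
    (T.continuous_of_finiteDimensional.inner continuous_id).neg
  obtain ⟨c, hc, hcK⟩ := hK.exists_forall_le' hcont.continuousOn (a := 0)
    fun u hu => neg_pos.mpr (hT u hu.2 (ne_zero_of_mem_unit_sphere ⟨u, hu.1⟩))
  refine ⟨c, hc, fun x hx => ?_⟩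
  rcases eq_or_ne x 0 with rfl | hx0
  · simp
  have hu : ‖x‖⁻¹ • x ∈ Metric.sphere (0 : V) 1 ∩ U :=
    ⟨by simp [norm_smul, hx0], U.smul_mem _ hx⟩
  have hxu : ⟪T x, x⟫ = ‖x‖ ^ 2 * ⟪T (‖x‖⁻¹ • x), ‖x‖⁻¹ • x⟫ := by
    rw [T.inner_map_smul_self, ← mul_assoc, ← mul_pow,
      mul_inv_cancel₀ (norm_ne_zero_iff.mpr hx0), one_pow, one_mul]
  have hcu := hcK _ hu
  rw [hxu]
  nlinarith [sq_nonneg ‖x‖]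

lemma ContinuousLinearMap.inner_map_add_self_le (B : V →L[ℝ] V) (y z : V) :
    ⟪B (y + z), y + z⟫ ≤ ‖B‖ * ‖y‖ ^ 2 + 2 * ‖B‖ * ‖y‖ * ‖z‖ + ⟪B z, z⟫ := by
  have hy : ⟪B y, y + z⟫ ≤ ‖B‖ * ‖y‖ * (‖y‖ + ‖z‖) :=
    (real_inner_le_norm _ _).trans (by gcongr; exacts [B.le_opNorm y, norm_add_le y z])
  have hz : ⟪B z, y⟫ ≤ ‖B‖ * ‖z‖ * ‖y‖ :=
    (real_inner_le_norm _ _).trans (by gcongr; exact B.le_opNorm z)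
  calc ⟪B (y + z), y + z⟫ = ⟪B y, y + z⟫ + ⟪B z, y⟫ + ⟪B z, z⟫ := by
        rw [map_add, inner_add_left, inner_add_right, inner_add_right]; ring
    _ ≤ _ := by linear_combination hy + hz

lemma LinearMap.IsSymmetric.inner_map_add_self_of_map_eq_zero {A : V →ₗ[ℝ] V}
    (hA : A.IsSymmetric) (y : V) {z : V} (hz : A z = 0) :
    ⟪A (y + z), y + z⟫ = ⟪A y, y⟫ := by
  rw [map_add, hz, add_zero, inner_add_right, hA y z, hz, inner_zero_right, add_zero]

lemma quadratic_form_neg_of_mul_le {b c M s Y Z : ℝ} (hb : 0 < b) (hc : 0 < c) (hs : 0 < s)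
    (hsM : s * (b * M + 2 * M ^ 2) ≤ b * c / 2) (hYZ : Y ≠ 0 ∨ Z ≠ 0) :
    -c * Y ^ 2 + s * (M * Y ^ 2 + 2 * M * Y * Z - b * Z ^ 2) < 0 := by
  have hamgm : b * (2 * M * Y * Z) ≤ 2 * M ^ 2 * Y ^ 2 + b ^ 2 / 2 * Z ^ 2 := by
    nlinarith [sq_nonneg (2 * M * Y - b * Z)]
  have hpos : 0 < c * Y ^ 2 + s * b * Z ^ 2 := by
    rcases hYZ with hY | hZ <;> positivity
  nlinarith

namespace LinearMap.IsSymmetric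

variable [FiniteDimensional ℝ V] {T : V →ₗ[ℝ] V} {n : ℕ}

lemma inner_map_self_eq_sum (hT : T.IsSymmetric) (hn : finrank ℝ V = n) (x : V) :
    ⟪T x, x⟫ = ∑ i, hT.eigenvalues hn i * ⟪hT.eigenvectorBasis hn i, x⟫ ^ 2 := by
  rw [← (hT.eigenvectorBasis hn).sum_inner_mul_inner (T x) x]
  refine Finset.sum_congr rfl fun i _ => ?_
  rw [hT x, apply_eigenvectorBasis, real_inner_smul_right, real_inner_comm,
    RCLike.ofReal_real_eq_id, id_eq]
  ring

lemma inner_eigenvectorBasis_eq_zero (hT : T.IsSymmetric) (hn : finrank ℝ V = n) {μ : ℝ}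
    {x : V} (hx : x ∈ Module.End.eigenspace T μ) {i : Fin n} (hi : hT.eigenvalues hn i ≠ μ) :
    ⟪hT.eigenvectorBasis hn i, x⟫ = 0 :=
  hT.orthogonalFamily_eigenspaces hi ⟨_, (hT.hasEigenvector_eigenvectorBasis hn i).1⟩ ⟨x, hx⟩

lemma inner_map_self_neg_of_mem_iSup_eigenspace (hT : T.IsSymmetric) {x : V}
    (hx : x ∈ ⨆ μ : {μ : ℝ // μ < 0}, Module.End.eigenspace T μ) (hx0 : x ≠ 0) :
    ⟪T x, x⟫ < 0 := by
  set e := hT.eigenvectorBasis rfl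
  set μ := hT.eigenvalues rfl
  have horth : ∀ i, 0 ≤ μ i → ⟪e i, x⟫ = 0 := by
    refine Submodule.iSup_induction _ (motive := fun x => ∀ i, 0 ≤ μ i → ⟪e i, x⟫ = 0) hx
      ?_ (by simp) fun y z hy hz i hi => by rw [inner_add_right, hy i hi, hz i hi, add_zero]
    exact fun t y hy i hi => hT.inner_eigenvectorBasis_eq_zero rfl hy (by linarith [t.2])
  obtain ⟨i₀, hi₀⟩ : ∃ i, ⟪e i, x⟫ ≠ 0 := by
    by_contra! h
    exact hx0 (by simpa [h] using (e.sum_repr' x).symm)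
  have hterm : ∀ i, μ i * ⟪e i, x⟫ ^ 2 ≤ 0 := fun i => by
    rcases le_or_gt 0 (μ i) with hμ | hμ
    · simp [horth i hμ]
    · exact mul_nonpos_of_nonpos_of_nonneg hμ.le (sq_nonneg _)
  have hneg : μ i₀ * ⟪e i₀, x⟫ ^ 2 < 0 :=
    mul_neg_of_neg_of_pos (not_le.mp fun h => hi₀ (horth i₀ h)) (by positivity)
  rw [hT.inner_map_self_eq_sum rfl]
  exact Finset.sum_neg' (fun i _ => hterm i) ⟨i₀, Finset.mem_univ _, hneg⟩

end LinearMap.IsSymmetric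

lemma exists_inner_add_smul_map_self_neg_on_sup [FiniteDimensional ℝ V] {A B : V →ₗ[ℝ] V}
    (hA : A.IsSymmetric) {Y Z : Submodule ℝ V} (hAZ : ∀ z ∈ Z, A z = 0)
    (hAY : ∀ y ∈ Y, y ≠ 0 → ⟪A y, y⟫ < 0) (hBZ : ∀ z ∈ Z, z ≠ 0 → ⟪B z, z⟫ < 0) :
    ∃ s₀ > 0, ∀ s : ℝ, 0 < s → s ≤ s₀ → ∀ x ∈ Y ⊔ Z, x ≠ 0 → ⟪(A + s • B) x, x⟫ < 0 := by
  obtain ⟨c, hc, hcY⟩ := A.exists_inner_map_self_le_neg_mul_norm_sq Y hAY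
  obtain ⟨b, hb, hbZ⟩ := B.exists_inner_map_self_le_neg_mul_norm_sq Z hBZ
  set M := ‖LinearMap.toContinuousLinearMap B‖
  obtain ⟨s₀, hs₀, hs₀M⟩ := exists_pos_mul_lt (half_pos (mul_pos hb hc)) (b * M + 2 * M ^ 2)
  refine ⟨s₀, hs₀, fun s hs hss₀ x hx hx0 => ?_⟩
  obtain ⟨y, hy, z, hz, rfl⟩ := Submodule.mem_sup.mp hx
  have hsM : s * (b * M + 2 * M ^ 2) ≤ b * c / 2 := by
    nlinarith [mul_le_mul_of_nonneg_right hss₀ (by positivity : 0 ≤ b * M + 2 * M ^ 2)]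
  have hyz : ‖y‖ ≠ 0 ∨ ‖z‖ ≠ 0 := by
    contrapose! hx0
    simp_all
  have hBx : ⟪B (y + z), y + z⟫ ≤ M * ‖y‖ ^ 2 + 2 * M * ‖y‖ * ‖z‖ - b * ‖z‖ ^ 2 := by
    have h := (LinearMap.toContinuousLinearMap B).inner_map_add_self_le y z
    rw [LinearMap.coe_toContinuousLinearMap'] at h
    linarith [hbZ z hz]
  calc ⟪(A + s • B) (y + z), y + z⟫ = ⟪A y, y⟫ + s * ⟪B (y + z), y + z⟫ := by
        rw [LinearMap.add_apply, LinearMap.smul_apply, inner_add_left, real_inner_smul_left,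
          hA.inner_map_add_self_of_map_eq_zero y (hAZ z hz)]
    _ ≤ -c * ‖y‖ ^ 2 + s * (M * ‖y‖ ^ 2 + 2 * M * ‖y‖ * ‖z‖ - b * ‖z‖ ^ 2) := by
        gcongr
        exact hcY y hy
    _ < 0 := quadratic_form_neg_of_mul_le hb hc hs hsM hyz

end

theorem negIndex_stable_under_perturbation_general
    {V : Type*} [NormedAddCommGroup V] [InnerProductSpace ℝ V]
    [FiniteDimensional ℝ V]
    (A B : V →ₗ[ℝ] V) (hA : A.IsSymmetric)
    (Eneg : Submodule ℝ V)
    (hEneg : Eneg = ⨆ μ : {μ : ℝ // μ < 0}, Module.End.eigenspace A (μ : ℝ))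
    (E0 : Submodule ℝ V) (hE0 : E0 = Module.End.eigenspace A 0)
    (hBneg : ∀ x ∈ E0, x ≠ 0 → (inner ℝ (B x) x : ℝ) < 0) :
    ∃ s₀ > 0, ∀ s : ℝ, 0 < s → s ≤ s₀ →
      ∀ x ∈ Eneg ⊔ E0, x ≠ 0 → (inner ℝ ((A + s • B) x) x : ℝ) < 0 := by
  subst hEneg hE0
  refine exists_inner_add_smul_map_self_neg_on_sup hA (fun z hz => ?_)
    (fun y hy hy0 => hA.inner_map_self_neg_of_mem_iSup_eigenspace hy hy0) hBneg
  simpa using Module.End.mem_eigenspace_iff.mp hz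

/-- Stability of the negative index under a perturbation which is negative
definite on the kernel: if `A` is a symmetric operator on a finite-dimensional
real inner product space with negative spectral subspace `E₋` and kernel `E₀`,
and `B` is a symmetric operator whose quadratic form is negative definite on
`E₀`, then for all sufficiently small `s > 0` the quadratic form of `A + s B`
is negative definite on `E₋ ⊕ E₀`. -/
theorem negIndex_stable_under_perturbation
    {V : Type*} [NormedAddCommGroup V] [InnerProductSpace ℝ V]
    [FiniteDimensional ℝ V]
    (A B : V →ₗ[ℝ] V) (hA : A.IsSymmetric) (hB : B.IsSymmetric)
    (Eneg : Submodule ℝ V)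
    (hEneg : Eneg = ⨆ μ : {μ : ℝ // μ < 0}, Module.End.eigenspace A (μ : ℝ))
    (E0 : Submodule ℝ V) (hE0 : E0 = Module.End.eigenspace A 0)
    (hBneg : ∀ x ∈ E0, x ≠ 0 → (inner ℝ (B x) x : ℝ) < 0) :
    ∃ s₀ > 0, ∀ s : ℝ, 0 < s → s ≤ s₀ →
      ∀ x ∈ Eneg ⊔ E0, x ≠ 0 → (inner ℝ ((A + s • B) x) x : ℝ) < 0 :=
  negIndex_stable_under_perturbation_general A B hA Eneg hEneg E0 hE0 hBneg
end

section
/- Let Q(z) be a nondegenerate real quadratic form on ℝ^m with negative eigenspace E⁻ and positive eigenspace E⁺, and let ε > 0. Set A = D_ε E⁻ × D_ε E⁺ (product of closed ε-disks, embedded via the orthogonal splitting ℝ^m = E⁻ ⊕ E⁺) and B = S_ε E⁻ × D_ε E⁺. Then the negative gradient flow of Q exits A exactly through B: for every point p ∈ A, either the flow stays in A forever (iff the E⁻-component of p is 0) or it leaves A through B, and at any point of B with nonzero E⁻-component the negative gradient of Q points strictly out of A. -/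
open Set Real

lemma sq_le_imp (a b : ℝ) (ha : 0 ≤ a) (hb : 0 ≤ b) (h : a^2 ≤ b^2) : a ≤ b := by nlinarith

lemma coercive_of_posdef {V : Type*} [NormedAddCommGroup V] [InnerProductSpace ℝ V]
    [FiniteDimensional ℝ V] (A₁ : V →ₗ[ℝ] V)
    (hpos : ∀ x : V, x ≠ 0 → (0:ℝ) < inner ℝ (A₁ x) x) (x₀ : V) (hx₀ : x₀ ≠ 0) :
    ∃ c : ℝ, 0 < c ∧ ∀ x : V, c * ‖x‖ ^ 2 ≤ inner ℝ (A₁ x) x := by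
  haveI : Nontrivial V := ⟨⟨x₀, 0, hx₀⟩⟩
  have hA : Continuous A₁ := A₁.continuous_of_finiteDimensional
  have hcont : Continuous fun x : V => (inner ℝ (A₁ x) x : ℝ) := hA.inner continuous_id
  have hsne : (Metric.sphere (0:V) 1).Nonempty := NormedSpace.sphere_nonempty.mpr zero_le_one
  obtain ⟨z, hz, hmin⟩ := (isCompact_sphere (0:V) 1).exists_isMinOn hsne hcont.continuousOn
  have hz1 : ‖z‖ = 1 := by simpa using hz
  have hzne : z ≠ 0 := by intro h; rw [h] at hz1; simp at hz1
  refine ⟨inner ℝ (A₁ z) z, hpos z hzne, fun x => ?_⟩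
  rcases eq_or_ne x 0 with rfl | hx
  · simp
  · have hn : (0:ℝ) < ‖x‖ := norm_pos_iff.mpr hx
    have hu : (‖x‖⁻¹ • x) ∈ Metric.sphere (0:V) 1 := by
      simp [norm_smul, abs_of_nonneg (inv_nonneg.mpr (norm_nonneg x)),
        inv_mul_cancel₀ hn.ne']
    have h1 : (inner ℝ (A₁ z) z : ℝ) ≤ inner ℝ (A₁ (‖x‖⁻¹ • x)) (‖x‖⁻¹ • x) := hmin hu
    have hcalc : (inner ℝ (A₁ (‖x‖⁻¹ • x)) (‖x‖⁻¹ • x) : ℝ)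
        = ‖x‖⁻¹ * ‖x‖⁻¹ * inner ℝ (A₁ x) x := by
      rw [map_smul, real_inner_smul_left, real_inner_smul_right]; ring
    rw [hcalc] at h1
    have h2 := mul_le_mul_of_nonneg_right h1 (sq_nonneg ‖x‖)
    calc inner ℝ (A₁ z) z * ‖x‖^2 ≤ (‖x‖⁻¹ * ‖x‖⁻¹ * inner ℝ (A₁ x) x) * ‖x‖^2 := h2
      _ = inner ℝ (A₁ x) x := by rw [sq]; field_simp

/-- Let `Q (x,y) = −⟪A₁ x, x⟫ + ⟪A₂ y, y⟫` be a nondegenerate quadratic form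
on `E⁻ × E⁺` (with `A₁, A₂` symmetric positive definite), and let
`A = D_ε E⁻ × D_ε E⁺`, `B = S_ε E⁻ × D_ε E⁺`.  The negative gradient flow of
`Q` (i.e. any solution of `γ' = (2 A₁ γ₁, −2 A₂ γ₂)`) exits `A` exactly
through `B`: a trajectory starting in `A` stays in `A` forever iff its
`E⁻`-component vanishes; otherwise it leaves `A` through `B`; and at any
point of `B` with nonzero `E⁻`-component the negative gradient points
strictly out of `A` (the norm of the `E⁻`-component strictly increases). -/
theorem negGradientFlow_exits_through_B
    {V W : Type*} [NormedAddCommGroup V] [InnerProductSpace ℝ V]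
    [FiniteDimensional ℝ V] [NormedAddCommGroup W] [InnerProductSpace ℝ W]
    [FiniteDimensional ℝ W]
    (A₁ : V →ₗ[ℝ] V) (A₂ : W →ₗ[ℝ] W)
    (hA₁ : A₁.IsSymmetric) (hA₂ : A₂.IsSymmetric)
    (hA₁pos : ∀ x : V, x ≠ 0 → (0:ℝ) < inner ℝ (A₁ x) x)
    (hA₂pos : ∀ y : W, y ≠ 0 → (0:ℝ) < inner ℝ (A₂ y) y)
    (ε : ℝ) (hε : 0 < ε)
    (A : Set (V × W)) (hA : A = {p | ‖p.1‖ ≤ ε ∧ ‖p.2‖ ≤ ε})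
    (B : Set (V × W)) (hB : B = {p | ‖p.1‖ = ε ∧ ‖p.2‖ ≤ ε}) :
    (∀ γ : ℝ → V × W,
      (∀ t, HasDerivAt γ ((2:ℝ) • A₁ (γ t).1, -(2:ℝ) • A₂ (γ t).2) t) →
      γ 0 ∈ A →
      (((∀ t ≥ (0:ℝ), γ t ∈ A) ↔ (γ 0).1 = 0) ∧
        ((γ 0).1 ≠ 0 →
          ∃ T ≥ (0:ℝ), γ T ∈ B ∧ ∀ s ∈ Set.Icc (0:ℝ) T, γ s ∈ A))) ∧
    (∀ p ∈ B, p.1 ≠ 0 → (0:ℝ) < inner ℝ ((2:ℝ) • A₁ p.1) p.1) := by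
  subst hA hB
  constructor
  · intro γ hγ hγ0
    obtain ⟨h01, h02⟩ := hγ0
    -- component derivatives
    have hx : ∀ t, HasDerivAt (fun s => (γ s).1) ((2:ℝ) • A₁ (γ t).1) t := fun t => by
      simpa [Function.comp_def] using ((ContinuousLinearMap.fst ℝ V W).hasFDerivAt.comp_hasDerivAt t (hγ t))
    have hy : ∀ t, HasDerivAt (fun s => (γ s).2) (-(2:ℝ) • A₂ (γ t).2) t := fun t => by
      simpa [Function.comp_def] using ((ContinuousLinearMap.snd ℝ V W).hasFDerivAt.comp_hasDerivAt t (hγ t))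
    set f : ℝ → ℝ := fun t => inner ℝ ((γ t).1) ((γ t).1) with hfdef
    set g : ℝ → ℝ := fun t => inner ℝ ((γ t).2) ((γ t).2) with hgdef
    have hf : ∀ t, HasDerivAt f (4 * inner ℝ (A₁ (γ t).1) ((γ t).1)) t := fun t => by
      have h := (hx t).inner ℝ (hx t)
      refine h.congr_deriv ?_
      rw [real_inner_smul_left, real_inner_smul_right, real_inner_comm ((γ t).1)]
      ring
    have hg : ∀ t, HasDerivAt g (-4 * inner ℝ (A₂ (γ t).2) ((γ t).2)) t := fun t => by
      have h := (hy t).inner ℝ (hy t)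
      refine h.congr_deriv ?_
      rw [real_inner_smul_left, real_inner_smul_right, real_inner_comm ((γ t).2)]
      ring
    have hfn : ∀ t, f t = ‖(γ t).1‖^2 := fun t => real_inner_self_eq_norm_sq _
    have hgn : ∀ t, g t = ‖(γ t).2‖^2 := fun t => real_inner_self_eq_norm_sq _
    have hA1nn : ∀ x : V, (0:ℝ) ≤ inner ℝ (A₁ x) x := fun x => by
      rcases eq_or_ne x 0 with rfl | h
      · simp
      · exact (hA₁pos x h).le
    have hA2nn : ∀ y : W, (0:ℝ) ≤ inner ℝ (A₂ y) y := fun y => by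
      rcases eq_or_ne y 0 with rfl | h
      · simp
      · exact (hA₂pos y h).le
    -- f monotone, g antitone
    have hfmono : Monotone f :=
      monotone_of_deriv_nonneg (fun t => (hf t).differentiableAt) fun t => by
        rw [(hf t).deriv]
        have := hA1nn (γ t).1; linarith
    have hganti : Antitone g :=
      antitone_of_deriv_nonpos (fun t => (hg t).differentiableAt) fun t => by
        rw [(hg t).deriv]
        have := hA2nn (γ t).2; linarith
    have h2bound : ∀ t ≥ (0:ℝ), ‖(γ t).2‖ ≤ ε := by
      intro t ht
      have := hganti ht
      rw [hgn, hgn] at this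
      exact sq_le_imp _ _ (norm_nonneg _) hε.le (this.trans (by nlinarith [norm_nonneg (γ 0).2]))
    -- Gronwall: zero initial first component stays zero (forward in time)
    have hzero : (γ 0).1 = 0 → ∀ t ≥ (0:ℝ), (γ t).1 = 0 := by
      intro h0 t ht
      set C : V →L[ℝ] V := ⟨A₁, A₁.continuous_of_finiteDimensional⟩ with hC
      have hcontx : ContinuousOn (fun s => (γ s).1) (Icc 0 t) :=
        (fun s _ => ((hx s).continuousAt.continuousWithinAt))
      have key := norm_le_gronwallBound_of_norm_deriv_right_le (δ := 0) (K := 2 * ‖C‖)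
        (ε := 0) hcontx
        (fun s _ => (hx s).hasDerivWithinAt)
        (by rw [h0]; simp)
        (fun s _ => by
          have hle : ‖A₁ (γ s).1‖ ≤ ‖C‖ * ‖(γ s).1‖ := C.le_opNorm _
          rw [norm_smul]
          simp only [Real.norm_ofNat]
          nlinarith)
      have := key t (by constructor <;> [exact ht; rfl])
      rwa [gronwallBound_ε0, zero_mul, norm_le_zero_iff] at this
    -- linear growth if initial first component nonzero
    have hgrow : (γ 0).1 ≠ 0 → ∃ t ≥ (0:ℝ), ε < ‖(γ t).1‖ := by
      intro h0
      obtain ⟨c, hc, hcoer⟩ := coercive_of_posdef A₁ hA₁pos _ h0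
      have hf0 : 0 < f 0 := by rw [hfn]; exact pow_pos (norm_pos_iff.mpr h0) 2
      set φ : ℝ → ℝ := fun t => f t - 4 * c * f 0 * t with hφdef
      have hφd : ∀ t, HasDerivAt φ
          (4 * inner ℝ (A₁ (γ t).1) ((γ t).1) - 4 * c * f 0 * 1) t := fun t =>
        (hf t).sub ((hasDerivAt_id t).const_mul (4 * c * f 0))
      have hφmono : MonotoneOn φ (Ici 0) := by
        apply monotoneOn_of_deriv_nonneg (convex_Ici 0)
          (fun t _ => (hφd t).continuousAt.continuousWithinAt)
          (fun t _ => ((hφd t).differentiableAt).differentiableWithinAt)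
        intro t ht
        rw [interior_Ici] at ht
        rw [(hφd t).deriv]
        have h1 : c * ‖(γ t).1‖ ^ 2 ≤ inner ℝ (A₁ (γ t).1) ((γ t).1) := hcoer _
        have h2 : f 0 ≤ f t := hfmono (le_of_lt ht)
        rw [← hfn] at h1
        nlinarith
      refine ⟨ε ^ 2 / (4 * c * f 0), le_of_lt (by positivity), ?_⟩
      have ht0 : (0:ℝ) ≤ ε ^ 2 / (4 * c * f 0) := le_of_lt (by positivity)
      have := hφmono (self_mem_Ici) (mem_Ici.mpr ht0) ht0
      rw [hφdef] at this
      simp only [mul_zero, sub_zero] at this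
      have hft : ε ^ 2 < f (ε ^ 2 / (4 * c * f 0)) := by
        have hne : (4 * c * f 0) ≠ 0 := by positivity
        have : f 0 + ε ^ 2 ≤ f (ε ^ 2 / (4 * c * f 0)) := by
          have hmul : 4 * c * f 0 * (ε ^ 2 / (4 * c * f 0)) = ε ^ 2 := by
            field_simp
          nlinarith [this]
        linarith
      rw [hfn] at hft
      nlinarith [norm_nonneg (γ (ε ^ 2 / (4 * c * f 0))).1]
    constructor
    · constructor
      · intro hall
        by_contra h0
        obtain ⟨t, ht, hlt⟩ := hgrow h0
        exact absurd (hall t ht).1 (not_le.mpr hlt)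
      · intro h0 t ht
        exact ⟨by rw [hzero h0 t ht]; simp [hε.le], h2bound t ht⟩
    · intro h0
      obtain ⟨t₁, ht₁, hlt⟩ := hgrow h0
      have hNcont : ContinuousOn (fun s => ‖(γ s).1‖) (Icc 0 t₁) :=
        fun s _ => ((hx s).continuousAt.norm.continuousWithinAt)
      have hmem : ε ∈ Icc ‖(γ 0).1‖ ‖(γ t₁).1‖ := ⟨h01, hlt.le⟩
      obtain ⟨T, hT, hTε⟩ := intermediate_value_Icc ht₁ hNcont hmem
      refine ⟨T, hT.1, ⟨hTε, h2bound T hT.1⟩, ?_⟩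
      intro s hs
      have hfs : f s ≤ f T := hfmono hs.2
      rw [hfn, hfn] at hfs
      have : ‖(γ T).1‖ = ε := hTε
      rw [this] at hfs
      exact ⟨sq_le_imp _ _ (norm_nonneg _) hε.le hfs, h2bound s hs.1⟩
  · intro p hp hne
    rw [real_inner_smul_left]
    have := hA₁pos p.1 hne
    linarith
end

section
/- For the standard action B(z) = Σ_{j ∈ ZMod r} y_j(x_{j+1} − x_j) on ℂ^r with r odd set M₋ = {1, ..., (r−1)/2} and M₊ = {−1, ..., −(r−1)/2} (mod r). Then B is negative definite on E₋ = ⊕_{m ∈ M₋} E_m, positive definite on E₊ = ⊕_{m ∈ M₊} E_m, and identically zero on E₀ (the constant vectors); hence E₋, of real dimension r−1, is a maximal subspace on which B is negative definite, and the Morse index of B equals r − 1. -/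
/-!
Expand `z = ∑ₘ cₘ χₘ` in the characters `χₘ j = e^{2πimj/r}` of `ZMod r`. Since
`yⱼ (xⱼ₊₁ - xⱼ) = Im (zⱼ Re Δzⱼ)` and `2 Re Δzⱼ = Δzⱼ + conj Δzⱼ`, orthogonality of characters
gives `B z = -(r/2) ∑ₘ |cₘ|² sin (2πm/r)` as soon as no nonzero frequency occurs together with its
opposite: the part `∑ⱼ zⱼ Δzⱼ` only pairs `m` with `-m`. Hence `B` is negative definite on the modes
`1, …, (r-1)/2`, positive definite on their opposites and zero on constants. As `B ≥ 0` on
`E₀ ⊕ E₊`, of real dimension `r + 1`, a negative definite subspace meets it trivially and so has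
dimension at most `2r - (r + 1)`.
-/

open Complex

noncomputable section

def fourierModeMap (r : ℕ) (m : ZMod r) : ℂ →ₗ[ℝ] (ZMod r → ℂ) where
  toFun b := fun j => b * Complex.exp (2 * Real.pi * I / r) ^ ((m * j).val)
  map_add' a b := by funext j; simp [add_mul]
  map_smul' c b := by
    funext j
    simp [Complex.real_smul, mul_assoc]

/-- `E_m = { (b·ρ^{mj})_j : b ∈ ℂ } ⊆ ℂ^r`. -/
def fourierMode (r : ℕ) (m : ZMod r) : Submodule ℝ (ZMod r → ℂ) :=
  LinearMap.range (fourierModeMap r m)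

open ZMod (stdAddChar)

lemma sum_normSq_mul_pos {ι : Type*} [Fintype ι] {c : ι → ℂ} {w : ι → ℝ} (hc : c ≠ 0)
    (hw : ∀ i, c i ≠ 0 → 0 < w i) : 0 < ∑ i, Complex.normSq (c i) * w i := by
  obtain ⟨i, hi⟩ := Function.ne_iff.1 hc
  refine Finset.sum_pos' (fun j _ => ?_) ⟨i, Finset.mem_univ i, ?_⟩
  · by_cases hj : c j = 0
    · simp [hj]
    · exact (mul_pos (Complex.normSq_pos.2 hj) (hw j hj)).le
  · exact mul_pos (Complex.normSq_pos.2 hi) (hw i hi)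

lemma finrank_real_pi_complex (ι : Type*) [Fintype ι] :
    Module.finrank ℝ (ι → ℂ) = 2 * Fintype.card ι := by
  simp [Module.finrank_pi_fintype ℝ, Complex.finrank_real_complex, mul_comm]

lemma Submodule.finrank_add_finrank_le_of_neg_of_nonneg {K V : Type*} [DivisionRing K]
    [AddCommGroup V] [Module K V] [FiniteDimensional K V] (Q : V → ℝ) {W P : Submodule K V}
    (hW : ∀ z ∈ W, z ≠ 0 → Q z < 0) (hP : ∀ z ∈ P, 0 ≤ Q z) :
    Module.finrank K W + Module.finrank K P ≤ Module.finrank K V :=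
  Submodule.finrank_add_finrank_le_of_disjoint <| Submodule.disjoint_def.2 fun z hzW hzP =>
    by_contra fun hz => (hW z hzW hz).not_ge (hP z hzP)

lemma ZMod.card_image_natCast_Icc {r k : ℕ} (hk : k < r) :
    ((Finset.Icc 1 k).image (Nat.cast : ℕ → ZMod r)).card = k := by
  rw [Finset.card_image_of_injOn, Nat.card_Icc, Nat.add_sub_cancel]
  intro i hi j hj hij
  simp only [Finset.coe_Icc, Set.mem_Icc] at hi hj
  rw [← ZMod.val_cast_of_lt (n := r) (by omega : i < r), hij, ZMod.val_cast_of_lt (by omega)]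

namespace DiscreteAction

def fourierChar (r : ℕ) [NeZero r] (m : ZMod r) : ZMod r → ℂ := fun j => stdAddChar (m * j)

variable {r : ℕ} [NeZero r]

lemma fourierChar_add_right (m j k : ZMod r) :
    fourierChar r m (j + k) = fourierChar r m j * stdAddChar (m * k) := by
  simp only [fourierChar, mul_add, AddChar.map_add_eq_mul]

lemma sum_fourierChar_mul_fourierChar (m m' : ZMod r) :
    ∑ j, fourierChar r m j * fourierChar r m' j = if m + m' = 0 then (r : ℂ) else 0 := by
  simp only [fourierChar, ← AddChar.map_add_eq_mul, ← add_mul, mul_comm _ (_ : ZMod r)]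
  rw [AddChar.sum_mulShift _ (ZMod.isPrimitive_stdAddChar r), ZMod.card]
  split_ifs <;> simp

lemma sum_fourierSum_mul_fourierSum (a b : ZMod r → ℂ) :
    ∑ j, (∑ m, a m • fourierChar r m) j * (∑ m, b m • fourierChar r m) j =
      r * ∑ m, a m * b (-m) := by
  simp only [Finset.sum_apply, Pi.smul_apply, smul_eq_mul, Finset.sum_mul_sum]
  rw [Finset.sum_comm, Finset.mul_sum]
  refine Finset.sum_congr rfl fun m _ => ?_
  rw [Finset.sum_comm]
  simp_rw [show ∀ m' j, a m * fourierChar r m j * (b m' * fourierChar r m' j) =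
    a m * b m' * (fourierChar r m j * fourierChar r m' j) from fun _ _ => by ring,
    ← Finset.mul_sum, sum_fourierChar_mul_fourierChar, add_eq_zero_iff_eq_neg']
  simp [mul_comm]

lemma conj_fourierChar (m j : ZMod r) :
    (starRingEnd ℂ) (fourierChar r m j) = fourierChar r (-m) j := by
  rw [fourierChar, fourierChar, neg_mul, AddChar.map_neg_eq_conj]

lemma sum_fourierSum_mul_conj_fourierSum (a b : ZMod r → ℂ) :
    ∑ j, (∑ m, a m • fourierChar r m) j * (starRingEnd ℂ) ((∑ m, b m • fourierChar r m) j) =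
      r * ∑ m, a m * (starRingEnd ℂ) (b m) := by
  have hconj : ∀ j, (starRingEnd ℂ) ((∑ m, b m • fourierChar r m) j) =
      (∑ m, (starRingEnd ℂ) (b (-m)) • fourierChar r m) j := by
    intro j
    simp only [Finset.sum_apply, Pi.smul_apply, smul_eq_mul, map_sum, map_mul, conj_fourierChar]
    exact (Fintype.sum_equiv (Equiv.neg _) _ _ fun m => by simp).symm
  simp_rw [hconj, sum_fourierSum_mul_fourierSum, neg_neg]

lemma fourierSum_add_one (c : ZMod r → ℂ) (j : ZMod r) :
    (∑ m, c m • fourierChar r m) (j + 1) = (∑ m, (c m * stdAddChar m) • fourierChar r m) j := by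
  simp only [Finset.sum_apply, Pi.smul_apply, smul_eq_mul, fourierChar_add_right, mul_one]
  exact Finset.sum_congr rfl fun m _ => by ring

lemma discreteAction_eq_im (z : ZMod r → ℂ) :
    discreteAction r z = (∑ j, z j * (z (j + 1) - z j) +
      ∑ j, z j * (starRingEnd ℂ) (z (j + 1) - z j)).im / 2 := by
  rw [← Finset.sum_add_distrib, Complex.im_sum, Finset.sum_div, discreteAction]
  refine Finset.sum_congr rfl fun j _ => ?_
  simp only [Complex.add_im, Complex.mul_im, Complex.conj_re, Complex.conj_im, Complex.sub_re,
    Complex.sub_im]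
  ring

theorem discreteAction_fourierSum (c : ZMod r → ℂ) (hc : ∀ m, c m ≠ 0 → c (-m) ≠ 0 → m = 0) :
    discreteAction r (∑ m, c m • fourierChar r m) =
      -(r / 2) * ∑ m, Complex.normSq (c m) * (stdAddChar m).im := by
  set z := ∑ m, c m • fourierChar r m
  have hdiff : ∀ j, z (j + 1) - z j = (∑ m, (c m * (stdAddChar m - 1)) • fourierChar r m) j := by
    intro j
    rw [show z (j + 1) = _ from fourierSum_add_one c j]
    simp only [z, Finset.sum_apply, Pi.smul_apply, smul_eq_mul,
      ← Finset.sum_sub_distrib]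
    exact Finset.sum_congr rfl fun m _ => by ring
  have hquad : ∑ j, z j * (z (j + 1) - z j) = 0 := by
    simp_rw [hdiff, z, sum_fourierSum_mul_fourierSum]
    refine mul_eq_zero_of_right _ (Finset.sum_eq_zero fun m _ => ?_)
    by_cases hm : m = 0
    · simp [hm]
    · by_cases hcm : c m = 0
      · simp [hcm]
      · simp [of_not_not (mt (hc m hcm) hm)]
  have hherm : ∑ j, z j * (starRingEnd ℂ) (z (j + 1) - z j) =
      r * ∑ m, (Complex.normSq (c m) : ℂ) * ((starRingEnd ℂ) (stdAddChar m) - 1) := by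
    simp_rw [hdiff, z, sum_fourierSum_mul_conj_fourierSum, map_mul, Complex.normSq_eq_conj_mul_self]
    congr 1
    refine Finset.sum_congr rfl fun m _ => by simp only [map_sub, map_one]; ring
  rw [discreteAction_eq_im, hquad, hherm, zero_add, Finset.mul_sum, Finset.mul_sum, Complex.im_sum,
    Finset.sum_div]
  refine Finset.sum_congr rfl fun m _ => ?_
  simp only [Complex.mul_im, Complex.mul_re, Complex.natCast_re, Complex.natCast_im,
    Complex.ofReal_re, Complex.ofReal_im, Complex.sub_im, Complex.sub_re, Complex.conj_im,
    Complex.conj_re, Complex.one_im, Complex.one_re]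
  ring

lemma im_stdAddChar_neg (m : ZMod r) : (stdAddChar (-m)).im = -(stdAddChar m).im := by
  rw [AddChar.map_neg_eq_conj, Complex.conj_im]

lemma fourierModeMap_eq_smul (m : ZMod r) (b : ℂ) : fourierModeMap r m b = b • fourierChar r m := by
  funext j
  simp only [fourierModeMap, LinearMap.coe_mk, AddHom.coe_mk, Pi.smul_apply, smul_eq_mul,
    fourierChar, ZMod.stdAddChar_apply, ZMod.toCircle_apply, ← Complex.exp_nat_mul]
  ring_nf

lemma fourierMode_eq_restrictScalars (m : ZMod r) :
    fourierMode r m = (ℂ ∙ fourierChar r m).restrictScalars ℝ := by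
  ext z
  simp [fourierMode, Submodule.mem_span_singleton, fourierModeMap_eq_smul]

lemma iSup_fourierMode_eq_span (A : Finset (ZMod r)) :
    ⨆ m ∈ A, fourierMode r m = (Submodule.span ℂ (fourierChar r '' A)).restrictScalars ℝ := by
  simp only [fourierMode_eq_restrictScalars, Set.image_eq_iUnion, Submodule.span_iUnion₂,
    Submodule.restrictScalars_iSup, Finset.mem_coe]

lemma linearIndependent_fourierChar : LinearIndependent ℂ (fourierChar r) := by
  have h : fourierChar r = (⇑) ∘ (stdAddChar (N := r)).mulShift := by
    funext m j
    simp [fourierChar]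
  rw [h]
  exact (AddChar.linearIndependent (ZMod r) ℂ).comp _
    (AddChar.to_mulShift_inj_of_isPrimitive (ZMod.isPrimitive_stdAddChar r))

lemma finrank_iSup_fourierMode (A : Finset (ZMod r)) :
    Module.finrank ℝ ↥(⨆ m ∈ A, fourierMode r m) = 2 * A.card := by
  rw [iSup_fourierMode_eq_span, ← Module.finrank_mul_finrank ℝ ℂ, Complex.finrank_real_complex,
    Set.image_eq_range]
  congr 1
  exact (finrank_span_eq_card (linearIndependent_fourierChar.comp _ Subtype.val_injective)).trans
    (Fintype.card_coe A)

lemma exists_fourierSum_eq_of_mem_iSup {A : Finset (ZMod r)} {z : ZMod r → ℂ}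
    (hz : z ∈ ⨆ m ∈ A, fourierMode r m) :
    ∃ c : ZMod r → ℂ, (∀ m, c m ≠ 0 → m ∈ A) ∧ ∑ m, c m • fourierChar r m = z := by
  obtain ⟨μ, rfl⟩ := (Submodule.mem_iSup_finset_iff_exists_sum _ _).1 hz
  choose b hb using fun m => (μ m).2
  refine ⟨fun m => if m ∈ A then b m else 0, fun m hm => by_contra fun h => hm (if_neg h), ?_⟩
  simp only [ite_smul, zero_smul, Fintype.sum_ite_mem, ← hb, fourierModeMap_eq_smul]

lemma discreteAction_of_mem_fourierMode_zero {z : ZMod r → ℂ} (hz : z ∈ fourierMode r 0) :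
    discreteAction r z = 0 := by
  obtain ⟨b, rfl⟩ := hz
  simp [discreteAction, fourierModeMap_eq_smul, fourierChar]

theorem discreteAction_neg_of_mem_iSup {A : Finset (ZMod r)}
    (hA : ∀ m ∈ A, 0 < (stdAddChar m).im) {z : ZMod r → ℂ}
    (hz : z ∈ ⨆ m ∈ A, fourierMode r m) (hz0 : z ≠ 0) : discreteAction r z < 0 := by
  obtain ⟨c, hcA, rfl⟩ := exists_fourierSum_eq_of_mem_iSup hz
  have hsign : ∀ m, c m ≠ 0 → 0 < (stdAddChar m).im := fun m hm => hA m (hcA m hm)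
  have hc : c ≠ 0 := by rintro rfl; simp at hz0
  rw [discreteAction_fourierSum c fun m hm hm' => by
    linarith [hsign m hm, hsign (-m) hm', im_stdAddChar_neg m]]
  have : (0 : ℝ) < r := Nat.cast_pos.2 (NeZero.pos r)
  nlinarith [sum_normSq_mul_pos hc hsign]

theorem discreteAction_pos_of_mem_iSup {A : Finset (ZMod r)}
    (hA : ∀ m ∈ A, (stdAddChar m).im < 0) {z : ZMod r → ℂ}
    (hz : z ∈ ⨆ m ∈ A, fourierMode r m) (hz0 : z ≠ 0) : 0 < discreteAction r z := by
  obtain ⟨c, hcA, rfl⟩ := exists_fourierSum_eq_of_mem_iSup hz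
  have hsign : ∀ m, c m ≠ 0 → 0 < -(stdAddChar m).im := fun m hm => neg_pos.2 (hA m (hcA m hm))
  have hc : c ≠ 0 := by rintro rfl; simp at hz0
  rw [discreteAction_fourierSum c fun m hm hm' => by
    linarith [hsign m hm, hsign (-m) hm', im_stdAddChar_neg m]]
  have : (0 : ℝ) < r := Nat.cast_pos.2 (NeZero.pos r)
  have := sum_normSq_mul_pos hc hsign
  simp only [mul_neg, Finset.sum_neg_distrib] at this
  nlinarith

theorem discreteAction_nonneg_of_mem_iSup {A : Finset (ZMod r)}
    (hA : ∀ m ∈ A, m = 0 ∨ (stdAddChar m).im < 0) {z : ZMod r → ℂ}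
    (hz : z ∈ ⨆ m ∈ A, fourierMode r m) : 0 ≤ discreteAction r z := by
  obtain ⟨c, hcA, rfl⟩ := exists_fourierSum_eq_of_mem_iSup hz
  have hsign : ∀ m, c m ≠ 0 → m = 0 ∨ (stdAddChar m).im < 0 := fun m hm => hA m (hcA m hm)
  have hopp : ∀ m, c m ≠ 0 → c (-m) ≠ 0 → m = 0 := fun m hm hm' => by
    rcases hsign m hm with h | h
    · exact h
    rcases hsign (-m) hm' with h' | h'
    · exact neg_eq_zero.1 h'
    · linarith [im_stdAddChar_neg m]
  have hterm : ∀ m, Complex.normSq (c m) * (stdAddChar m).im ≤ 0 := fun m => by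
    by_cases hm : c m = 0
    · simp [hm]
    rcases hsign m hm with h | h
    · simp [h]
    · exact mul_nonpos_of_nonneg_of_nonpos (Complex.normSq_nonneg _) h.le
  rw [discreteAction_fourierSum c hopp]
  have : (0 : ℝ) < r := Nat.cast_pos.2 (NeZero.pos r)
  nlinarith [Finset.sum_nonpos fun m (_ : m ∈ Finset.univ) => hterm m]

lemma im_stdAddChar_natCast_pos {i : ℕ} (hi : 0 < i) (hir : 2 * i < r) :
    0 < (stdAddChar (i : ZMod r)).im := by
  have hr : (0 : ℝ) < r := Nat.cast_pos.2 (NeZero.pos r)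
  have hir' : (2 * i : ℝ) < r := by exact_mod_cast hir
  rw [ZMod.stdAddChar_apply, ZMod.toCircle_natCast,
    show 2 * Real.pi * I * i / r = ((2 * Real.pi * i / r : ℝ) : ℂ) * I by push_cast; ring,
    Complex.exp_ofReal_mul_I_im]
  refine Real.sin_pos_of_pos_of_lt_pi (by positivity) ?_
  rw [div_lt_iff₀ hr]
  nlinarith [Real.pi_pos]

lemma im_stdAddChar_pos_of_mem_image_Icc {k : ℕ} (hk : 2 * k < r) :
    ∀ m ∈ (Finset.Icc 1 k).image (Nat.cast : ℕ → ZMod r), 0 < (stdAddChar m).im := by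
  simp only [Finset.mem_image, Finset.mem_Icc]
  rintro _ ⟨i, hi, rfl⟩
  exact im_stdAddChar_natCast_pos (by omega) (by omega)

end DiscreteAction

open DiscreteAction in
/-- For `r` odd, the discrete action `B` is negative definite on
`E₋ = ⊕_{m ∈ M₋} E_m` (`M₋ = {1, …, (r−1)/2}`), positive definite on
`E₊ = ⊕_{m ∈ M₊} E_m` (`M₊ = −M₋`), and vanishes on the constant vectors
`E₀`; `E₋` has real dimension `r − 1` and is a maximal negative subspace,
so the Morse index of `B` is `r − 1`. -/
theorem discreteAction_index (r : ℕ) [NeZero r] (hodd : Odd r)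
    (Eneg Epos : Submodule ℝ (ZMod r → ℂ))
    (hEneg : Eneg = ⨆ m ∈ Finset.Icc 1 ((r - 1) / 2),
      fourierMode r ((m : ℕ) : ZMod r))
    (hEpos : Epos = ⨆ m ∈ Finset.Icc 1 ((r - 1) / 2),
      fourierMode r (-((m : ℕ) : ZMod r))) :
    (∀ z ∈ Eneg, z ≠ 0 → discreteAction r z < 0) ∧
    (∀ z ∈ Epos, z ≠ 0 → 0 < discreteAction r z) ∧
    (∀ z ∈ fourierMode r 0, discreteAction r z = 0) ∧
    Module.finrank ℝ Eneg = r - 1 ∧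
    (∀ W : Submodule ℝ (ZMod r → ℂ),
      (∀ z ∈ W, z ≠ 0 → discreteAction r z < 0) →
      Module.finrank ℝ W ≤ r - 1) := by
  obtain ⟨k, hk⟩ := hodd
  set Aneg := (Finset.Icc 1 k).image (Nat.cast : ℕ → ZMod r)
  set Apos := Aneg.image Neg.neg
  replace hEneg : Eneg = ⨆ m ∈ Aneg, fourierMode r m := by
    rw [hEneg, Finset.iSup_finset_image, show (r - 1) / 2 = k by omega]
  replace hEpos : Epos = ⨆ m ∈ Apos, fourierMode r m := by
    simp only [hEpos, Apos, Aneg, Finset.image_image, Finset.iSup_finset_image,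
      show (r - 1) / 2 = k by omega]
    rfl
  have him_neg := im_stdAddChar_pos_of_mem_image_Icc (r := r) (k := k) (by omega)
  have him_pos : ∀ m ∈ Apos, (stdAddChar m).im < 0 := by
    simp only [Apos, Finset.mem_image]
    rintro _ ⟨m, hm, rfl⟩
    linarith [im_stdAddChar_neg m, him_neg m hm]
  have hcard : Aneg.card = k := ZMod.card_image_natCast_Icc (by omega)
  have hcard_pos : (insert 0 Apos).card = k + 1 := by
    rw [Finset.card_insert_of_notMem fun h => by simpa using him_pos 0 h,
      Finset.card_image_of_injective _ neg_injective, hcard]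
  refine ⟨fun z hz => discreteAction_neg_of_mem_iSup him_neg (hEneg ▸ hz),
    fun z hz => discreteAction_pos_of_mem_iSup him_pos (hEpos ▸ hz),
    fun z => discreteAction_of_mem_fourierMode_zero,
    by rw [hEneg, finrank_iSup_fourierMode, hcard]; omega, fun W hW => ?_⟩
  have hP : ∀ z ∈ ⨆ m ∈ insert 0 Apos, fourierMode r m, 0 ≤ discreteAction r z := fun _ =>
    discreteAction_nonneg_of_mem_iSup fun m hm => (Finset.mem_insert.1 hm).imp_right (him_pos m)
  have hdim := Submodule.finrank_add_finrank_le_of_neg_of_nonneg _ hW hP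
  rw [finrank_iSup_fourierMode, hcard_pos, finrank_real_pi_complex, ZMod.card] at hdim
  omega

end
end
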